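/- Instance reducibility has Heyting implication: for predicates φ : A → Prop and ψ : B → Prop, define (φ ⇒ ψ) to be the predicate on the subtype {p : Prop // ∀ x : A, ∃ y : B, ψ y → (φ x ∨ p)} sending p to p.val. Then for every predicate θ : C → Prop, θ ⊓ φ ≤ᵢ ψ if and only if θ ≤ᵢ (φ ⇒ ψ). -/

import Mathlib

universe u v w

/-- Instance reducibility. -/
def InstRed {A : Type u} {B : Type v} (φ : A → Prop) (ψ : B → Prop) : Prop :=
  ∀ x : A, ∃ y : B, ψ y → φ x

/-- The infimum of two predicates, defined on the product type. -/
def iInf2 {A : Type u} {B : Type v} (φ : A → Prop) (ψ : B → Prop) : A × B → Prop :=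
  fun p => φ p.1 ∨ ψ p.2

/-- Heyting implication of instance degrees. -/
def iImp {A : Type u} {B : Type v} (φ : A → Prop) (ψ : B → Prop) :
    {p : Prop // ∀ x : A, ∃ y : B, ψ y → (φ x ∨ p)} → Prop :=
  fun p => p.val

section

variable {A : Type u} {B : Type v} {C : Type w} {φ : A → Prop} {ψ : B → Prop} {θ : C → Prop}

/-- The instance of `iImp φ ψ` answering `z` is the proposition `θ z` itself. -/
theorem InstRed.iImp_of_iInf2 (h : InstRed (iInf2 θ φ) ψ) : InstRed θ (iImp φ ψ) :=
  fun z => ⟨⟨θ z, fun x => (h (z, x)).imp fun _ hy hψ => (hy hψ).symm⟩, id⟩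

theorem InstRed.iInf2_of_iImp (h : InstRed θ (iImp φ ψ)) : InstRed (iInf2 θ φ) ψ := by
  rintro ⟨z, x⟩
  obtain ⟨⟨p, hp⟩, hpθ⟩ := h z
  exact (hp x).imp fun _ hy hψ => ((hy hψ).imp_right hpθ).symm

end

theorem instRed_heyting {A : Type u} {B : Type v} {C : Type w}
    (φ : A → Prop) (ψ : B → Prop) (θ : C → Prop) :
    InstRed (iInf2 θ φ) ψ ↔ InstRed θ (iImp φ ψ) :=
  ⟨InstRed.iImp_of_iInf2, InstRed.iInf2_of_iImp⟩
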